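/- arXiv:2210.09127 — 5 statements merged into one kernel-verified Lean document; each statement's English description precedes it below -/
import Mathlib

section
/- For α ∈ (0,1), β ∈ (1, 1+α), and u(x) = |x|^β - 1 on the unit ball B₁ ⊂ ℝ^N, the function u is convex, its Hessian determinant det D²u = β^N(β-1)|x|^{N(β-2)} belongs to L¹(B₁), but u is not in C^{1,α}_{loc}(B₁). -/
open MeasureTheory Metric Real

noncomputable def Hess {N : ℕ} (u : EuclideanSpace ℝ (Fin N) → ℝ)
    (x : EuclideanSpace ℝ (Fin N)) : Matrix (Fin N) (Fin N) ℝ :=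
  fun i j => fderiv ℝ (fun y => fderiv ℝ u y (EuclideanSpace.single i 1)) x
    (EuclideanSpace.single j 1)

open Filter Topology Set
open scoped NNReal

/-! The Hessian of `‖x‖ ^ p` away from the origin is `p ‖x‖^(p-2) (I + (p-2) x xᵀ / ‖x‖²)`, a
rank-one perturbation of a multiple of the identity, so the matrix determinant lemma gives
`p^N (p-1) ‖x‖^(N(p-2))`; its exponent exceeds `-N`, hence it is integrable near `0`.
For `p > 1` the gradient `p ‖x‖^(p-2) x` vanishes at `0` and has norm `p ‖x‖^(p-1)`, so an
`α`-Hölder bound at the origin would force `t^(p-1) ≲ t^α` as `t → 0⁺`, which fails when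
`p - 1 < α`. -/

theorem Matrix.det_one_add_vecMulVec {m R : Type*} [Fintype m] [DecidableEq m] [CommRing R]
    (u v : m → R) : (1 + Matrix.vecMulVec u v).det = 1 + v ⬝ᵥ u := by
  rw [Matrix.vecMulVec_eq Unit, Matrix.det_one_add_replicateCol_mul_replicateRow]

theorem exists_mul_rpow_lt_mul_rpow {a C s r ε : ℝ} (ha : 0 < a) (hsr : s < r) (hε : 0 < ε) :
    ∃ t ∈ Ioo 0 ε, C * t ^ r < a * t ^ s := by
  obtain ⟨t, hlarge, ht⟩ := (((tendsto_rpow_neg_nhdsGT_zero (sub_neg.2 hsr)).eventually_gt_atTop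
    (C / a)).and (Ioo_mem_nhdsGT hε)).exists
  refine ⟨t, ht, ?_⟩
  rw [div_lt_iff₀ ha] at hlarge
  calc C * t ^ r < t ^ (s - r) * a * t ^ r := by gcongr; exact rpow_pos_of_pos ht.1 r
    _ = a * t ^ s := by rw [mul_right_comm, ← rpow_add ht.1, sub_add_cancel, mul_comm]

theorem convexOn_univ_norm_rpow {E : Type*} [SeminormedAddCommGroup E] [NormedSpace ℝ E] {p : ℝ}
    (hp : 1 ≤ p) : ConvexOn ℝ univ fun x : E ↦ ‖x‖ ^ p := by
  refine ⟨convex_univ, fun x _ y _ a b ha hb hab ↦ ?_⟩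
  calc ‖a • x + b • y‖ ^ p ≤ (a * ‖x‖ + b * ‖y‖) ^ p := by
        gcongr; exact convexOn_univ_norm.2 trivial trivial ha hb hab
    _ ≤ a * ‖x‖ ^ p + b * ‖y‖ ^ p := (convexOn_rpow hp).2 (norm_nonneg x) (norm_nonneg y) ha hb hab

section InnerProductSpace

variable {E : Type*} [NormedAddCommGroup E] [InnerProductSpace ℝ E]

theorem hasFDerivAt_norm_rpow_of_ne_zero (p : ℝ) {x : E} (hx : x ≠ 0) :
    HasFDerivAt (fun x : E ↦ ‖x‖ ^ p) ((p * ‖x‖ ^ (p - 2)) • innerSL ℝ x) x := by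
  apply HasStrictFDerivAt.hasFDerivAt
  convert! (hasStrictFDerivAt_norm_sq x).rpow_const (p := p / 2) (by simp [hx]) using 0
  simp_rw [← Real.rpow_natCast_mul (norm_nonneg _), ← Nat.cast_smul_eq_nsmul ℝ, smul_smul]
  ring_nf

theorem gradient_norm_rpow_sub_const [CompleteSpace E] {p : ℝ} (hp : 1 < p) (c : ℝ) (x : E) :
    gradient (fun x : E ↦ ‖x‖ ^ p - c) x = (p * ‖x‖ ^ (p - 2)) • x := by
  rw [gradient, fderiv_sub_const, fderiv_norm_rpow x hp, ← map_smul]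
  exact (InnerProductSpace.toDual ℝ E).symm_apply_apply _

theorem norm_gradient_norm_rpow_sub_const [CompleteSpace E] {p : ℝ} (hp : 1 < p) (c : ℝ) (x : E) :
    ‖gradient (fun x : E ↦ ‖x‖ ^ p - c) x‖ = p * ‖x‖ ^ (p - 1) := by
  rw [gradient_norm_rpow_sub_const hp, norm_smul, norm_mul, norm_of_nonneg (by linarith),
    norm_of_nonneg (by positivity)]
  rcases eq_or_ne x 0 with rfl | hx
  · simp [zero_rpow (by linarith : p - 1 ≠ 0)]
  · rw [mul_assoc, ← rpow_add_one (norm_ne_zero_iff.mpr hx)]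
    ring_nf

theorem integrableOn_ball_norm_rpow [FiniteDimensional ℝ E] [MeasurableSpace E] [BorelSpace E]
    (μ : Measure E) [μ.IsAddHaarMeasure] (hd : 1 ≤ Module.finrank ℝ E) {s : ℝ}
    (hs : -(Module.finrank ℝ E : ℝ) < s) (r : ℝ) :
    IntegrableOn (fun x : E ↦ ‖x‖ ^ s) (ball 0 r) μ := by
  refine integrableOn_ball_of_norm_le_rpow hd (C := 1) (α := -s) (by linarith)
    (ae_of_all _ fun x ↦ ?_) (measurable_norm.pow_const s).aestronglyMeasurable
  rw [one_mul, neg_neg, norm_of_nonneg (by positivity)]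

theorem not_holderOnWith_gradient_norm_rpow_sub_const [CompleteSpace E] [Nontrivial E]
    {p : ℝ} (hp : 1 < p) (c : ℝ) (C r : ℝ≥0) (hr : p - 1 < r) {ε : ℝ} (hε : 0 < ε) :
    ¬ HolderOnWith C r (gradient fun x : E ↦ ‖x‖ ^ p - c) (ball 0 ε) := by
  intro h
  obtain ⟨e, he⟩ := exists_norm_eq E zero_le_one
  obtain ⟨t, ht, hlt⟩ := exists_mul_rpow_lt_mul_rpow (a := p) (C := C) (by linarith) hr hε
  have hte : ‖t • e‖ = t := by rw [norm_smul, he, mul_one, norm_of_nonneg ht.1.le]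
  have := h.dist_le (x := t • e) (y := 0) (by simpa [hte] using ht.2) (mem_ball_self hε)
  rw [gradient_norm_rpow_sub_const hp c 0, smul_zero, dist_zero_right,
    norm_gradient_norm_rpow_sub_const hp, dist_zero_right, hte] at this
  exact (this.trans_lt hlt).false

end InnerProductSpace

section EuclideanSpace

variable {N : ℕ}

theorem hess_norm_rpow_sub_const (p c : ℝ) {x : EuclideanSpace ℝ (Fin N)} (hx : x ≠ 0) :
    Hess (fun z ↦ ‖z‖ ^ p - c) x
      = (p * ‖x‖ ^ (p - 2)) • (1 + Matrix.vecMulVec (((p - 2) / ‖x‖ ^ 2) • ⇑x) ⇑x) := by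
  ext i j
  have hfirst : (fun y ↦ fderiv ℝ (fun z : EuclideanSpace ℝ (Fin N) ↦ ‖z‖ ^ p - c) y
      (EuclideanSpace.single i 1)) =ᶠ[𝓝 x] fun y ↦ (p * ‖y‖ ^ (p - 2)) * y i := by
    filter_upwards [isOpen_ne.mem_nhds hx] with y hy
    rw [((hasFDerivAt_norm_rpow_of_ne_zero p hy).sub_const c).fderiv]
    simp [EuclideanSpace.inner_single_right]
  have hsecond : HasFDerivAt (fun y : EuclideanSpace ℝ (Fin N) ↦ (p * ‖y‖ ^ (p - 2)) * y i) _ x :=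
    ((hasFDerivAt_norm_rpow_of_ne_zero (p - 2) hx).const_mul p).fun_mul
      (EuclideanSpace.proj (𝕜 := ℝ) i).hasFDerivAt
  rw [Hess, hfirst.fderiv_eq, hsecond.fderiv]
  simp only [add_apply, smul_apply, PiLp.proj_apply, PiLp.single_apply, smul_eq_mul, mul_ite,
    mul_one, mul_zero, innerSL_apply_apply, EuclideanSpace.inner_single_right, Matrix.smul_apply,
    Matrix.add_apply, Matrix.one_apply, Matrix.vecMulVec_apply, Matrix.smul_vecMulVec,
    conj_trivial, one_mul]
  rw [rpow_sub (norm_pos_iff.mpr hx) (p - 2) 2, rpow_two]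
  split_ifs <;> ring

theorem det_hess_norm_rpow_sub_const (p c : ℝ) {x : EuclideanSpace ℝ (Fin N)} (hx : x ≠ 0) :
    (Hess (fun z ↦ ‖z‖ ^ p - c) x).det = p ^ N * (p - 1) * ‖x‖ ^ ((N : ℝ) * (p - 2)) := by
  have hxx : ⇑x ⬝ᵥ ⇑x = ‖x‖ ^ 2 := by
    rw [EuclideanSpace.norm_sq_eq]
    simp only [Real.norm_eq_abs, sq_abs, dotProduct, ← sq]
  rw [hess_norm_rpow_sub_const p c hx, Matrix.det_smul, Matrix.det_one_add_vecMulVec,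
    dotProduct_smul, hxx, Fintype.card_fin, mul_pow, mul_comm (N : ℝ),
    rpow_mul_natCast (norm_nonneg x), smul_eq_mul,
    div_mul_cancel₀ _ (pow_ne_zero 2 (norm_ne_zero_iff.mpr hx))]
  ring

end EuclideanSpace

/-- Counterexample to higher interior regularity. -/
theorem stmt3 (N : ℕ) (hN : 1 ≤ N) (α β : ℝ) (hα : α ∈ Set.Ioo (0:ℝ) 1)
    (hβ : β ∈ Set.Ioo (1:ℝ) (1 + α))
    (u : EuclideanSpace ℝ (Fin N) → ℝ) (hu : ∀ x, u x = ‖x‖ ^ β - 1) :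
    ConvexOn ℝ (ball (0 : EuclideanSpace ℝ (Fin N)) 1) u ∧
    (∀ x : EuclideanSpace ℝ (Fin N), x ≠ 0 →
      (Hess u x).det = β ^ N * (β - 1) * ‖x‖ ^ ((N : ℝ) * (β - 2))) ∧
    IntegrableOn (fun x => (Hess u x).det) (ball (0 : EuclideanSpace ℝ (Fin N)) 1) ∧
    ¬ (∀ x ∈ ball (0 : EuclideanSpace ℝ (Fin N)) 1, ∃ ε > (0:ℝ), ∃ C : NNReal,
        HolderOnWith C ⟨α, hα.1.le⟩ (gradient u) (ball x ε)) := by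
  obtain rfl : u = fun x ↦ ‖x‖ ^ β - 1 := funext hu
  obtain ⟨hβ1, hβα⟩ := hβ
  have hd : 1 ≤ Module.finrank ℝ (EuclideanSpace ℝ (Fin N)) := by simpa using hN
  have : Nontrivial (EuclideanSpace ℝ (Fin N)) := Module.nontrivial_of_finrank_pos hd
  refine ⟨((convexOn_univ_norm_rpow hβ1.le).sub (concaveOn_const 1 convex_univ)).subset
    (subset_univ _) (convex_ball 0 1), fun x hx ↦ det_hess_norm_rpow_sub_const β 1 hx, ?_, ?_⟩
  · have hs : -(Module.finrank ℝ (EuclideanSpace ℝ (Fin N)) : ℝ) < N * (β - 2) := by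
      have hN' : (1 : ℝ) ≤ N := by exact_mod_cast hN
      rw [finrank_euclideanSpace_fin]
      nlinarith
    refine ((integrableOn_ball_norm_rpow volume hd hs 1).const_mul (β ^ N * (β - 1))).congr ?_
    filter_upwards [ae_restrict_of_ae (volume.ae_ne 0)] with x hx
    exact (det_hess_norm_rpow_sub_const β 1 hx).symm
  · intro hHolder
    obtain ⟨ε, hε, C, hC⟩ := hHolder 0 (mem_ball_self one_pos)
    have hαβ : β - 1 < (⟨α, hα.1.le⟩ : ℝ≥0) := by change β - 1 < α; linarith
    exact not_holderOnWith_gradient_norm_rpow_sub_const hβ1 1 C _ hαβ hε hC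
end

section
/- Let u(x) = ζ(x₁)|x'|² - η(x₁) for x = (x₁, x') ∈ ℝ × ℝ^n, with ζ, η twice differentiable and ζ > 0. Then the Hessian determinant satisfies det D²u = (2ζ)^n [ζ''|x'|² - η'' - (2ζ'²/ζ)|x'|²]. -/
/-!
With `S = |x'|²`, the first partials are `∂₁u = ζ'S - η'` (again of the form of `u`) and
`∂u/∂x'ₖ = 2ζ x'ₖ`. Hence `D²u` is an arrowhead matrix: corner `ζ''S - η''`, first row and column
`2ζ' x'`, and `2ζ · I` on the `x'`-block. Taking the Schur complement of that invertible block gives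
`det D²u = (2ζ)ⁿ (ζ''S - η'' - |2ζ' x'|² / (2ζ))`.
-/

open MeasureTheory Metric Real

open EuclideanSpace

open Matrix in
theorem Matrix.det_eq_of_arrowhead {K : Type*} [Field K] {n : ℕ}
    (M : Matrix (Fin (n + 1)) (Fin (n + 1)) K) (a c : K) (b d : Fin n → K) (hc : c ≠ 0)
    (h00 : M 0 0 = a) (h0s : ∀ k : Fin n, M 0 k.succ = b k) (hs0 : ∀ k : Fin n, M k.succ 0 = d k)
    (hss : ∀ k m : Fin n, M k.succ m.succ = if k = m then c else 0) :
    M.det = c ^ n * (a - (∑ k, b k * d k) / c) := by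
  let e : Fin (n + 1) ≃ Fin n ⊕ Unit := (finSuccEquiv n).trans (Equiv.optionEquivSumPUnit _)
  have hblocks : M.submatrix e.symm e.symm =
      fromBlocks (c • 1) (replicateCol Unit d) (replicateRow Unit b) (of fun _ _ => a) := by
    ext (k | _) (m | _) <;> simp [e, hss, h0s, hs0, h00, Matrix.one_apply]
  let _ : Invertible (c • 1 : Matrix (Fin n) (Fin n) K) := ⟨c⁻¹ • 1, by simp [hc], by simp [hc]⟩
  rw [← det_submatrix_equiv_self e.symm, hblocks, det_fromBlocks₁₁, det_smul, det_one,
    det_unique, show ⅟(c • 1 : Matrix (Fin n) (Fin n) K) = c⁻¹ • 1 from rfl]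
  simp [Matrix.mul_apply, Finset.mul_sum, div_eq_inv_mul, mul_left_comm]

section Coordinates

variable {ι : Type*} [Fintype ι] [DecidableEq ι]

theorem fderiv_apply_apply_single (y : EuclideanSpace ℝ ι) (i j : ι) :
    fderiv ℝ (fun z : EuclideanSpace ℝ ι => z i) y (single j 1) = if j = i then 1 else 0 := by
  simp [(PiLp.hasFDerivAt_apply 2 y i).fderiv, eq_comm]

theorem fderiv_mul_sub_apply_single {f g : ℝ → ℝ} {Q : EuclideanSpace ℝ ι → ℝ}
    {y : EuclideanSpace ℝ ι} {i₀ : ι} (hf : DifferentiableAt ℝ f (y i₀))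
    (hg : DifferentiableAt ℝ g (y i₀)) (hQ : DifferentiableAt ℝ Q y) (j : ι) :
    fderiv ℝ (fun z => f (z i₀) * Q z - g (z i₀)) y (single j 1) =
      (if j = i₀ then deriv f (y i₀) * Q y - deriv g (y i₀) else 0) +
        f (y i₀) * fderiv ℝ Q y (single j 1) := by
  have hcoord := PiLp.hasFDerivAt_apply (𝕜 := ℝ) 2 y i₀
  have hderiv : HasFDerivAt (fun z => f (z i₀) * Q z - g (z i₀))
      (f (y i₀) • fderiv ℝ Q y + Q y • deriv f (y i₀) • PiLp.proj 2 (fun _ => ℝ) i₀ -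
        deriv g (y i₀) • PiLp.proj 2 (fun _ => ℝ) i₀) y :=
    ((hf.hasDerivAt.comp_hasFDerivAt y hcoord).mul hQ.hasFDerivAt).sub
      (hg.hasDerivAt.comp_hasFDerivAt y hcoord)
  rw [hderiv.fderiv]
  split_ifs with hj
  · subst hj; simp; ring
  · simp [hj]

theorem fderiv_apply_sq_apply_single (y : EuclideanSpace ℝ ι) (i j : ι) :
    fderiv ℝ (fun z : EuclideanSpace ℝ ι => z i ^ 2) y (single j 1) =
      if j = i then 2 * y i else 0 := by
  rw [((PiLp.hasFDerivAt_apply (𝕜 := ℝ) 2 y i).pow 2).fderiv]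
  split_ifs with hj <;> simp [hj]

theorem fderiv_comp_apply_mul_apply_apply_single {f : ℝ → ℝ} {y : EuclideanSpace ℝ ι} {i₀ : ι}
    (hf : DifferentiableAt ℝ f (y i₀)) (i j : ι) :
    fderiv ℝ (fun z : EuclideanSpace ℝ ι => f (z i₀) * z i) y (single j 1) =
      (if j = i₀ then deriv f (y i₀) * y i else 0) + (if j = i then f (y i₀) else 0) := by
  have := fderiv_mul_sub_apply_single (g := fun _ => 0) hf (differentiableAt_const _)
    (PiLp.hasFDerivAt_apply 2 y i).differentiableAt j
  simpa [fderiv_apply_apply_single] using this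

end Coordinates

section Ansatz

variable {n : ℕ}

def tailSqNorm (x : EuclideanSpace ℝ (Fin (n + 1))) : ℝ := ∑ i : Fin n, x i.succ ^ 2

def ansatz (ζ η : ℝ → ℝ) (x : EuclideanSpace ℝ (Fin (n + 1))) : ℝ :=
  ζ (x 0) * tailSqNorm x - η (x 0)

theorem differentiable_tailSqNorm : Differentiable ℝ (tailSqNorm (n := n)) := by
  unfold tailSqNorm
  fun_prop

theorem fderiv_tailSqNorm_apply_single (y : EuclideanSpace ℝ (Fin (n + 1))) (j : Fin (n + 1)) :
    fderiv ℝ tailSqNorm y (single j 1) = if j = 0 then 0 else 2 * y j := by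
  unfold tailSqNorm
  rw [fderiv_fun_sum (fun i _ => by fun_prop)]
  simp only [FunLike.coe_sum, Finset.sum_apply, fderiv_apply_sq_apply_single]
  induction j using Fin.cases with
  | zero => simp [(Fin.succ_ne_zero _).symm]
  | succ m => simp [Fin.succ_inj]

variable {ζ η : ℝ → ℝ}

theorem fderiv_ansatz_apply_single_zero (hζ : Differentiable ℝ ζ) (hη : Differentiable ℝ η)
    (y : EuclideanSpace ℝ (Fin (n + 1))) :
    fderiv ℝ (ansatz ζ η) y (single 0 1) = ansatz (deriv ζ) (deriv η) y := by
  unfold ansatz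
  rw [fderiv_mul_sub_apply_single (hζ _) (hη _) (differentiable_tailSqNorm _),
    fderiv_tailSqNorm_apply_single]
  simp

theorem fderiv_ansatz_apply_single_succ (hζ : Differentiable ℝ ζ) (hη : Differentiable ℝ η)
    (y : EuclideanSpace ℝ (Fin (n + 1))) (k : Fin n) :
    fderiv ℝ (ansatz ζ η) y (single k.succ 1) = 2 * ζ (y 0) * y k.succ := by
  unfold ansatz
  rw [fderiv_mul_sub_apply_single (hζ _) (hη _) (differentiable_tailSqNorm _),
    fderiv_tailSqNorm_apply_single]
  simp [Fin.succ_ne_zero]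
  ring

theorem hess_ansatz_zero_zero (hζ : Differentiable ℝ ζ) (hη : Differentiable ℝ η)
    (hζ' : Differentiable ℝ (deriv ζ)) (hη' : Differentiable ℝ (deriv η))
    (x : EuclideanSpace ℝ (Fin (n + 1))) :
    Hess (ansatz ζ η) x 0 0 = ansatz (deriv (deriv ζ)) (deriv (deriv η)) x := by
  simp only [Hess, fderiv_ansatz_apply_single_zero hζ hη, fderiv_ansatz_apply_single_zero hζ' hη']

theorem hess_ansatz_zero_succ (hζ : Differentiable ℝ ζ) (hη : Differentiable ℝ η)
    (hζ' : Differentiable ℝ (deriv ζ)) (hη' : Differentiable ℝ (deriv η))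
    (x : EuclideanSpace ℝ (Fin (n + 1))) (m : Fin n) :
    Hess (ansatz ζ η) x 0 m.succ = 2 * deriv ζ (x 0) * x m.succ := by
  simp only [Hess, fderiv_ansatz_apply_single_zero hζ hη, fderiv_ansatz_apply_single_succ hζ' hη']

theorem hess_ansatz_succ_zero (hζ : Differentiable ℝ ζ) (hη : Differentiable ℝ η)
    (x : EuclideanSpace ℝ (Fin (n + 1))) (k : Fin n) :
    Hess (ansatz ζ η) x k.succ 0 = 2 * deriv ζ (x 0) * x k.succ := by
  simp [Hess, fderiv_ansatz_apply_single_succ hζ hη,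
    fderiv_comp_apply_mul_apply_apply_single ((hζ _).const_mul 2), (Fin.succ_ne_zero k).symm]

theorem hess_ansatz_succ_succ (hζ : Differentiable ℝ ζ) (hη : Differentiable ℝ η)
    (x : EuclideanSpace ℝ (Fin (n + 1))) (k m : Fin n) :
    Hess (ansatz ζ η) x k.succ m.succ = if k = m then 2 * ζ (x 0) else 0 := by
  simp [Hess, fderiv_ansatz_apply_single_succ hζ hη,
    fderiv_comp_apply_mul_apply_apply_single ((hζ _).const_mul 2), Fin.succ_ne_zero, eq_comm]

end Ansatz

/-- Hessian determinant of the ansatz. -/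
theorem stmt5 (n : ℕ) (ζ η : ℝ → ℝ) (hζ : ContDiff ℝ 2 ζ) (hη : ContDiff ℝ 2 η)
    (hζpos : ∀ t, 0 < ζ t)
    (u : EuclideanSpace ℝ (Fin (n + 1)) → ℝ)
    (hu : ∀ x, u x = ζ (x 0) * (∑ i : Fin n, (x i.succ) ^ 2) - η (x 0))
    (x : EuclideanSpace ℝ (Fin (n + 1))) :
    (Hess u x).det =
      (2 * ζ (x 0)) ^ n *
        (deriv (deriv ζ) (x 0) * (∑ i : Fin n, (x i.succ) ^ 2)
          - deriv (deriv η) (x 0)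
          - 2 * (deriv ζ (x 0)) ^ 2 / ζ (x 0) * (∑ i : Fin n, (x i.succ) ^ 2)) := by
  obtain rfl : u = ansatz ζ η := funext hu
  have hζ1 := hζ.differentiable two_ne_zero
  have hη1 := hη.differentiable two_ne_zero
  have hζ2 := hζ.differentiable_deriv_two
  have hη2 := hη.differentiable_deriv_two
  have hζx := (hζpos (x 0)).ne'
  rw [Matrix.det_eq_of_arrowhead _ _ _ _ _ (mul_ne_zero two_ne_zero hζx)
    (hess_ansatz_zero_zero hζ1 hη1 hζ2 hη2 x) (hess_ansatz_zero_succ hζ1 hη1 hζ2 hη2 x)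
    (hess_ansatz_succ_zero hζ1 hη1 x) (hess_ansatz_succ_succ hζ1 hη1 x)]
  have hsum : ∑ k : Fin n, 2 * deriv ζ (x 0) * x k.succ * (2 * deriv ζ (x 0) * x k.succ) =
      4 * deriv ζ (x 0) ^ 2 * tailSqNorm x := by
    rw [tailSqNorm, Finset.mul_sum]
    exact Finset.sum_congr rfl fun _ _ => by ring
  rw [hsum, ansatz, tailSqNorm]
  field_simp
  ring
end

section
/- Suppose ζ, η : (0,ω) → ℝ satisfy ζ > 0, ζ'' - 2ζ'²/ζ < 0, and (ζ''/ζ - 2ζ'²/ζ²)η - η'' ≥ 0 with η > 0 on (0,ω). Then the function u(x) = ζ(x₁)|x'|² - η(x₁) is convex on the domain Ω = {x : x₁ ∈ (0,ω), ζ(x₁)|x'|² - η(x₁) < 0}. -/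
open MeasureTheory Metric Real

/-!
Write `x = (s, v)` with `v ∈ ℝⁿ`. The region `{u < 0}` is `{‖v‖ < g s}` with `g = √(η / ζ)`,
and the condition on `η''` makes `g` concave, so the region is convex. Along a segment
`t ↦ x + t • d` in it, with `δ = d₁`, `Q = ‖v‖²`, `P = ⟪v, d'⟫`, `R = ‖d'‖²`, the restriction
of `u` has second derivative `δ²ζ''Q + 4δζ'P + 2ζR - δ²η''`. Bounding `η''` by the hypothesis
and then using `η > ζQ` (allowed because `ζ''/ζ - 2ζ'²/ζ² < 0`) turns this into
`(2/ζ)‖δζ'v + ζd'‖² ≥ 0`.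
-/

open Set

theorem hasDerivAt_of_contDiffOn_two {f : ℝ → ℝ} {U : Set ℝ} (hf : ContDiffOn ℝ 2 f U)
    (hU : IsOpen U) {x : ℝ} (hx : x ∈ U) : HasDerivAt f (deriv f x) x :=
  ((hf.differentiableOn (by norm_num)).differentiableAt (hU.mem_nhds hx)).hasDerivAt

theorem hasDerivAt_deriv_of_contDiffOn_two {f : ℝ → ℝ} {U : Set ℝ} (hf : ContDiffOn ℝ 2 f U)
    (hU : IsOpen U) {x : ℝ} (hx : x ∈ U) : HasDerivAt (deriv f) (deriv (deriv f) x) x :=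
  (((hf.deriv_of_isOpen (m := 1) hU (by norm_num)).differentiableOn
    (by norm_num)).differentiableAt (hU.mem_nhds hx)).hasDerivAt

theorem concaveOn_sqrt_of_hasDerivAt {I : Set ℝ} (hI : IsOpen I) (hIc : Convex ℝ I)
    {w w' w'' : ℝ → ℝ} (hw : ∀ t ∈ I, HasDerivAt w (w' t) t)
    (hw' : ∀ t ∈ I, HasDerivAt w' (w'' t) t) (hpos : ∀ t ∈ I, 0 < w t)
    (h : ∀ t ∈ I, 2 * w t * w'' t ≤ w' t ^ 2) :
    ConcaveOn ℝ I fun t => √(w t) := by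
  have hsqrt : ∀ t ∈ I, HasDerivAt (fun t => √(w t)) (w' t / (2 * √(w t))) t :=
    fun t ht => (hw t ht).sqrt (hpos t ht).ne'
  have hsqrt' : ∀ t ∈ I, HasDerivAt (fun t => w' t / (2 * √(w t)))
      ((w'' t * (2 * √(w t)) - w' t * (2 * (w' t / (2 * √(w t))))) / (2 * √(w t)) ^ 2) t :=
    fun t ht => (hw' t ht).div ((hsqrt t ht).const_mul 2)
      (by have := Real.sqrt_pos.2 (hpos t ht); positivity)
  refine concaveOn_of_hasDerivWithinAt2_nonpos hIc
    (fun t ht => (hsqrt t ht).continuousAt.continuousWithinAt)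
    (fun t ht => (hsqrt t (interior_subset ht)).hasDerivWithinAt)
    (fun t ht => (hsqrt' t (interior_subset ht)).hasDerivWithinAt) fun t ht => ?_
  rw [hI.interior_eq] at ht
  have hr : 0 < √(w t) := Real.sqrt_pos.2 (hpos t ht)
  apply div_nonpos_of_nonpos_of_nonneg _ (sq_nonneg _)
  rw [sub_nonpos, ← mul_le_mul_iff_of_pos_right hr]
  field_simp
  rw [Real.sq_sqrt (hpos t ht).le]
  linarith [h t ht]

theorem concaveOn_sqrt_div {I : Set ℝ} (hI : IsOpen I) (hIc : Convex ℝ I) {ζ η : ℝ → ℝ}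
    (hζ : ContDiffOn ℝ 2 ζ I) (hη : ContDiffOn ℝ 2 η I)
    (hζpos : ∀ t ∈ I, 0 < ζ t) (hηpos : ∀ t ∈ I, 0 < η t)
    (h2 : ∀ t ∈ I, (deriv (deriv ζ) t / ζ t - 2 * deriv ζ t ^ 2 / ζ t ^ 2) * η t
      - deriv (deriv η) t ≥ 0) :
    ConcaveOn ℝ I fun t => √(η t / ζ t) := by
  set N : ℝ → ℝ := fun t => deriv η t * ζ t - η t * deriv ζ t
  set N' : ℝ → ℝ := fun t => deriv (deriv η) t * ζ t - η t * deriv (deriv ζ) t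
  have hN : ∀ t ∈ I, HasDerivAt N (N' t) t := fun t ht =>
    (((hasDerivAt_deriv_of_contDiffOn_two hη hI ht).mul
      (hasDerivAt_of_contDiffOn_two hζ hI ht)).sub
      ((hasDerivAt_of_contDiffOn_two hη hI ht).mul
        (hasDerivAt_deriv_of_contDiffOn_two hζ hI ht))).congr_deriv (by simp only [N']; ring)
  refine concaveOn_sqrt_of_hasDerivAt hI hIc (w' := fun t => N t / ζ t ^ 2)
    (w'' := fun t => (N' t * ζ t - 2 * N t * deriv ζ t) / ζ t ^ 3)
    (fun t ht => ?_) (fun t ht => ?_) (fun t ht => div_pos (hηpos t ht) (hζpos t ht))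
    (fun t ht => ?_)
  · exact ((hasDerivAt_of_contDiffOn_two hη hI ht).div (hasDerivAt_of_contDiffOn_two hζ hI ht)
      (hζpos t ht).ne')
  · have hz := (hζpos t ht).ne'
    exact ((hN t ht).div ((hasDerivAt_of_contDiffOn_two hζ hI ht).pow 2)
      (pow_ne_zero 2 hz)).congr_deriv (by simp only [Pi.pow_apply]; field_simp; ring)
  · have hz := hζpos t ht
    have h2' : 0 ≤ (deriv (deriv ζ) t * ζ t - 2 * deriv ζ t ^ 2) * η t
        - deriv (deriv η) t * ζ t ^ 2 := by
      have := mul_nonneg (h2 t ht).le (sq_nonneg (ζ t))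
      field_simp at this
      linarith
    have hexpand : (N t / ζ t ^ 2) ^ 2
          - 2 * (η t / ζ t) * ((N' t * ζ t - 2 * N t * deriv ζ t) / ζ t ^ 3)
        = ((deriv η t * ζ t + η t * deriv ζ t) ^ 2 + 2 * η t * ((deriv (deriv ζ) t * ζ t
          - 2 * deriv ζ t ^ 2) * η t - deriv (deriv η) t * ζ t ^ 2)) / ζ t ^ 4 := by
      simp only [N, N']
      field_simp
      ring
    rw [← sub_nonneg, hexpand]
    exact div_nonneg (add_nonneg (sq_nonneg _)
      (mul_nonneg (mul_nonneg zero_le_two (hηpos t ht).le) h2')) (by positivity)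

-- `z, z₁, z₂` stand for `ζ, ζ', ζ''` and `e, e₂` for `η, η''` at a point of the segment;
-- `Q, P, R` for `‖v‖², ⟪v, d'⟫, ‖d'‖²`.
theorem radial_deriv2_nonneg {z z₁ z₂ e e₂ δ Q P R : ℝ} (hz : 0 < z)
    (h1 : z₂ - 2 * z₁ ^ 2 / z < 0) (h2 : (z₂ / z - 2 * z₁ ^ 2 / z ^ 2) * e - e₂ ≥ 0)
    (hQ : z * Q ≤ e) (hPSD : 0 ≤ (δ * z₁) ^ 2 * Q + 2 * (δ * z₁) * z * P + z ^ 2 * R) :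
    0 ≤ δ ^ 2 * z₂ * Q + 4 * δ * z₁ * P + 2 * z * R - δ ^ 2 * e₂ := by
  set k := z₂ / z - 2 * z₁ ^ 2 / z ^ 2
  have hk : k < 0 := by
    have : k = (z₂ - 2 * z₁ ^ 2 / z) / z := by simp only [k]; field_simp
    exact this ▸ div_neg_of_neg_of_pos h1 hz
  have he₂ : e₂ ≤ k * (z * Q) := by nlinarith
  calc 0 ≤ 2 / z * ((δ * z₁) ^ 2 * Q + 2 * (δ * z₁) * z * P + z ^ 2 * R) := by positivity
    _ = δ ^ 2 * z₂ * Q + 4 * δ * z₁ * P + 2 * z * R - δ ^ 2 * (k * (z * Q)) := by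
      simp only [k]; field_simp; ring
    _ ≤ _ := by nlinarith [mul_le_mul_of_nonneg_left he₂ (sq_nonneg δ)]

def radialQuadratic {E : Type*} [Norm E] (ζ η : ℝ → ℝ) (p : ℝ × E) : ℝ :=
  ζ p.1 * ‖p.2‖ ^ 2 - η p.1

section Normed

variable {E : Type*} [SeminormedAddCommGroup E] [NormedSpace ℝ E]

theorem convex_setOf_norm_lt_of_concaveOn {I : Set ℝ} {g : ℝ → ℝ} (hg : ConcaveOn ℝ I g) :
    Convex ℝ {p : ℝ × E | p.1 ∈ I ∧ ‖p.2‖ < g p.1} := by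
  have hconv : ConvexOn ℝ (LinearMap.fst ℝ ℝ E ⁻¹' I) fun p => ‖p.2‖ - g p.1 :=
    (((convexOn_norm convex_univ).comp_linearMap (LinearMap.snd ℝ ℝ E)).subset
      (subset_univ _) (hg.1.linear_preimage _)).sub (hg.comp_linearMap _)
  simpa only [sub_neg, mem_preimage, LinearMap.fst_apply] using hconv.convex_lt 0

theorem convex_setOf_radialQuadratic_neg {I : Set ℝ} {ζ η : ℝ → ℝ}
    (hζpos : ∀ t ∈ I, 0 < ζ t) (hg : ConcaveOn ℝ I fun t => √(η t / ζ t)) :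
    Convex ℝ {p : ℝ × E | p.1 ∈ I ∧ radialQuadratic ζ η p < 0} := by
  convert convex_setOf_norm_lt_of_concaveOn (E := E) hg using 3 with p
  refine and_congr_right fun hp => ?_
  rw [radialQuadratic, sub_neg, Real.lt_sqrt (norm_nonneg _), lt_div_iff₀ (hζpos _ hp), mul_comm]

end Normed

section InnerProductSpace

variable {E : Type*} [NormedAddCommGroup E] [InnerProductSpace ℝ E]

theorem convexOn_Icc_radialQuadratic_add_smul {I : Set ℝ} (hI : IsOpen I) {ζ η : ℝ → ℝ}
    (hζ : ContDiffOn ℝ 2 ζ I) (hη : ContDiffOn ℝ 2 η I) (hζpos : ∀ t ∈ I, 0 < ζ t)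
    (h1 : ∀ t ∈ I, deriv (deriv ζ) t - 2 * deriv ζ t ^ 2 / ζ t < 0)
    (h2 : ∀ t ∈ I, (deriv (deriv ζ) t / ζ t - 2 * deriv ζ t ^ 2 / ζ t ^ 2) * η t
      - deriv (deriv η) t ≥ 0) (x d : ℝ × E)
    (hseg : ∀ t ∈ Icc (0:ℝ) 1,
      x + t • d ∈ {p : ℝ × E | p.1 ∈ I ∧ radialQuadratic ζ η p < 0}) :
    ConvexOn ℝ (Icc 0 1) fun t : ℝ => radialQuadratic ζ η (x + t • d) := by
  set c : ℝ → ℝ := fun t => x.1 + t * d.1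
  set v : ℝ → E := fun t => x.2 + t • d.2
  have hc : ∀ t, HasDerivAt c d.1 t := fun t =>
    (((hasDerivAt_id' t).mul_const d.1).const_add x.1).congr_deriv (one_mul _)
  have hv : ∀ t, HasDerivAt v d.2 t := fun t =>
    (((hasDerivAt_id' t).smul_const d.2).const_add x.2).congr_deriv (one_smul _ _)
  have hcI : ∀ t ∈ Icc (0:ℝ) 1, c t ∈ I := fun t ht => (hseg t ht).1
  have hφ : ∀ t ∈ Icc (0:ℝ) 1, HasDerivAt (fun t : ℝ => radialQuadratic ζ η (x + t • d))
      (d.1 * deriv ζ (c t) * ‖v t‖ ^ 2 + ζ (c t) * (2 * inner ℝ (v t) d.2)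
        - d.1 * deriv η (c t)) t := fun t ht =>
    ((((hasDerivAt_of_contDiffOn_two hζ hI (hcI t ht)).comp t (hc t)).mul
      (hv t).norm_sq).sub
      ((hasDerivAt_of_contDiffOn_two hη hI (hcI t ht)).comp t (hc t))).congr_deriv
      (by simp only [Function.comp_apply]; ring)
  have hφ' : ∀ t ∈ Icc (0:ℝ) 1, HasDerivAt (fun t => d.1 * deriv ζ (c t) * ‖v t‖ ^ 2
        + ζ (c t) * (2 * inner ℝ (v t) d.2) - d.1 * deriv η (c t))
      (d.1 ^ 2 * deriv (deriv ζ) (c t) * ‖v t‖ ^ 2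
        + 4 * d.1 * deriv ζ (c t) * inner ℝ (v t) d.2 + 2 * ζ (c t) * ‖d.2‖ ^ 2
        - d.1 ^ 2 * deriv (deriv η) (c t)) t := fun t ht => by
    have hζ' := (hasDerivAt_of_contDiffOn_two hζ hI (hcI t ht)).comp t (hc t)
    have hζ'' := (hasDerivAt_deriv_of_contDiffOn_two hζ hI (hcI t ht)).comp t (hc t)
    have hη'' := (hasDerivAt_deriv_of_contDiffOn_two hη hI (hcI t ht)).comp t (hc t)
    have hinner := (hv t).inner ℝ (hasDerivAt_const t d.2)
    refine ((((hζ''.const_mul d.1).mul (hv t).norm_sq).add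
      (hζ'.mul (hinner.const_mul 2))).sub (hη''.const_mul d.1)).congr_deriv ?_
    simp only [Function.comp_def, inner_zero_right, real_inner_self_eq_norm_sq, real_inner_comm]
    ring
  refine convexOn_of_hasDerivWithinAt2_nonneg (convex_Icc 0 1)
    (fun t ht => (hφ t ht).continuousAt.continuousWithinAt)
    (fun t ht => (hφ t (interior_subset ht)).hasDerivWithinAt)
    (fun t ht => (hφ' t (interior_subset ht)).hasDerivWithinAt) fun t ht => ?_
  rw [interior_Icc] at ht
  obtain ⟨hct, hneg⟩ := hseg t (Ioo_subset_Icc_self ht)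
  refine radial_deriv2_nonneg (hζpos _ hct) (h1 _ hct) (h2 _ hct)
    (sub_neg.1 hneg).le ?_
  have hsq := norm_add_sq_real ((d.1 * deriv ζ (c t)) • v t) (ζ (c t) • d.2)
  rw [real_inner_smul_left, real_inner_smul_right, norm_smul, norm_smul, mul_pow, mul_pow,
    Real.norm_eq_abs, Real.norm_eq_abs, sq_abs, sq_abs] at hsq
  nlinarith [sq_nonneg ‖(d.1 * deriv ζ (c t)) • v t + ζ (c t) • d.2‖]

theorem convexOn_radialQuadratic {I : Set ℝ} (hI : IsOpen I) (hIc : Convex ℝ I) {ζ η : ℝ → ℝ}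
    (hζ : ContDiffOn ℝ 2 ζ I) (hη : ContDiffOn ℝ 2 η I)
    (hζpos : ∀ t ∈ I, 0 < ζ t) (hηpos : ∀ t ∈ I, 0 < η t)
    (h1 : ∀ t ∈ I, deriv (deriv ζ) t - 2 * deriv ζ t ^ 2 / ζ t < 0)
    (h2 : ∀ t ∈ I, (deriv (deriv ζ) t / ζ t - 2 * deriv ζ t ^ 2 / ζ t ^ 2) * η t
      - deriv (deriv η) t ≥ 0) :
    ConvexOn ℝ {p : ℝ × E | p.1 ∈ I ∧ radialQuadratic ζ η p < 0} (radialQuadratic ζ η) := by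
  set S := {p : ℝ × E | p.1 ∈ I ∧ radialQuadratic ζ η p < 0}
  have hS : Convex ℝ S := convex_setOf_radialQuadratic_neg hζpos
    (concaveOn_sqrt_div hI hIc hζ hη hζpos hηpos h2)
  refine ⟨hS, fun x hx y hy a b ha hb hab => ?_⟩
  have hseg : ∀ t ∈ Icc (0:ℝ) 1, x + t • (y - x) ∈ S := fun t ht => by
    convert hS hx hy (sub_nonneg.2 ht.2) ht.1 (sub_add_cancel 1 t) using 1
    module
  have hφ := (convexOn_Icc_radialQuadratic_add_smul hI hζ hη hζpos h1 h2 x (y - x) hseg).2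
    (left_mem_Icc.2 zero_le_one) (right_mem_Icc.2 zero_le_one) ha hb hab
  simp only [smul_eq_mul, mul_zero, mul_one, zero_add, zero_smul, add_zero, one_smul,
    add_sub_cancel] at hφ
  obtain rfl : a = 1 - b := by linarith
  simp only [smul_eq_mul]
  convert hφ using 2
  module

end InnerProductSpace

def EuclideanSpace.headTail (n : ℕ) :
    EuclideanSpace ℝ (Fin (n + 1)) →ₗ[ℝ] ℝ × EuclideanSpace ℝ (Fin n) where
  toFun x := (x 0, WithLp.toLp 2 fun i => x i.succ)
  map_add' _ _ := rfl
  map_smul' _ _ := rfl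

theorem stmt6_general (n : ℕ) (ω : ℝ) (ζ η : ℝ → ℝ)
    (hζ : ContDiffOn ℝ 2 ζ (Set.Ioo 0 ω)) (hη : ContDiffOn ℝ 2 η (Set.Ioo 0 ω))
    (hζpos : ∀ t ∈ Set.Ioo (0:ℝ) ω, 0 < ζ t)
    (hηpos : ∀ t ∈ Set.Ioo (0:ℝ) ω, 0 < η t)
    (h1 : ∀ t ∈ Set.Ioo (0:ℝ) ω, deriv (deriv ζ) t - 2 * (deriv ζ t) ^ 2 / ζ t < 0)
    (h2 : ∀ t ∈ Set.Ioo (0:ℝ) ω,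
      (deriv (deriv ζ) t / ζ t - 2 * (deriv ζ t) ^ 2 / (ζ t) ^ 2) * η t
        - deriv (deriv η) t ≥ 0)
    (u : EuclideanSpace ℝ (Fin (n + 1)) → ℝ)
    (hu : ∀ x, u x = ζ (x 0) * (∑ i : Fin n, (x i.succ) ^ 2) - η (x 0)) :
    ConvexOn ℝ {x : EuclideanSpace ℝ (Fin (n + 1)) | x 0 ∈ Set.Ioo (0:ℝ) ω ∧ u x < 0} u := by
  obtain rfl : u = radialQuadratic ζ η ∘ EuclideanSpace.headTail n := funext fun x => by
    rw [hu, Function.comp_apply, radialQuadratic, EuclideanSpace.real_norm_sq_eq]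
    rfl
  exact (convexOn_radialQuadratic isOpen_Ioo (convex_Ioo 0 ω) hζ hη hζpos hηpos h1 h2
    |>.comp_linearMap (EuclideanSpace.headTail n))

/-- Convexity of the ansatz inside the region where it is negative. -/
theorem stmt6 (n : ℕ) (ω : ℝ) (hω : 0 < ω) (ζ η : ℝ → ℝ)
    (hζ : ContDiffOn ℝ 2 ζ (Set.Ioo 0 ω)) (hη : ContDiffOn ℝ 2 η (Set.Ioo 0 ω))
    (hζpos : ∀ t ∈ Set.Ioo (0:ℝ) ω, 0 < ζ t)
    (hηpos : ∀ t ∈ Set.Ioo (0:ℝ) ω, 0 < η t)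
    (h1 : ∀ t ∈ Set.Ioo (0:ℝ) ω, deriv (deriv ζ) t - 2 * (deriv ζ t) ^ 2 / ζ t < 0)
    (h2 : ∀ t ∈ Set.Ioo (0:ℝ) ω,
      (deriv (deriv ζ) t / ζ t - 2 * (deriv ζ t) ^ 2 / (ζ t) ^ 2) * η t
        - deriv (deriv η) t ≥ 0)
    (u : EuclideanSpace ℝ (Fin (n + 1)) → ℝ)
    (hu : ∀ x, u x = ζ (x 0) * (∑ i : Fin n, (x i.succ) ^ 2) - η (x 0)) :
    ConvexOn ℝ {x : EuclideanSpace ℝ (Fin (n + 1)) | x 0 ∈ Set.Ioo (0:ℝ) ω ∧ u x < 0} u :=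
  stmt6_general n ω ζ η hζ hη hζpos hηpos h1 h2 u hu
end

section
/- For θ ∈ (0, 1/2) and constants C₁, C₂ > 0, C₃, C₄ ≥ 0, the function u(y,t) = C₁|y|² + C₂ t^{2 - 1/θ} + C₃ t + C₄ on ℝ^n × (0,∞) is a strictly convex solution of the affine maximal type equation u^{ij} D_{ij} w = 0 with w = (det D²u)^{-θ}, and its graph is Euclidean complete but not an elliptic paraboloid. -/
open MeasureTheory Metric Real

/-!
On the half-space `t > 0` the Hessian of `u` is `diag(2C₁, …, 2C₁, C₂ α (α - 1) t ^ (α - 2))` with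
`α = 2 - 1/θ < 0`, so it is positive definite and `det D²u` is a constant times `t ^ (-1/θ)`.
The exponent is chosen so that `w = (det D²u) ^ (-θ)` is then linear in `t`: `D²w = 0` and the
equation holds. Since `α < 0`, `u → +∞` at the boundary `t = 0`; this makes the graph closed, hence
complete, and rules out agreement with a quadratic polynomial, which stays bounded there.
-/

open Filter Topology

section Hessian

variable {N : ℕ}

theorem hess_congr {f g : EuclideanSpace ℝ (Fin N) → ℝ} {x : EuclideanSpace ℝ (Fin N)}
    (h : f =ᶠ[𝓝 x] g) : Hess f x = Hess g x := by
  ext i j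
  have hf : (fun y => fderiv ℝ f y (EuclideanSpace.single i 1)) =ᶠ[𝓝 x]
      fun y => fderiv ℝ g y (EuclideanSpace.single i 1) :=
    (h.fderiv (𝕜 := ℝ)).mono fun y hy => by simp only [hy]
  simp only [Hess, hf.fderiv_eq]

theorem hess_continuousLinearMap (L : EuclideanSpace ℝ (Fin N) →L[ℝ] ℝ)
    (x : EuclideanSpace ℝ (Fin N)) : Hess L x = 0 := by
  ext i j
  simp [Hess, ContinuousLinearMap.fderiv]

theorem hasFDerivAt_sum_apply {f f' : Fin N → ℝ → ℝ} {x : EuclideanSpace ℝ (Fin N)}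
    (hf : ∀ i, HasDerivAt (f i) (f' i (x i)) (x i)) :
    HasFDerivAt (fun y : EuclideanSpace ℝ (Fin N) => ∑ i, f i (y i))
      (∑ i, f' i (x i) • EuclideanSpace.proj (𝕜 := ℝ) i) x :=
  HasFDerivAt.fun_sum fun i _ =>
    ((hf i).comp_hasFDerivAt x (EuclideanSpace.proj (𝕜 := ℝ) i).hasFDerivAt).congr_fderiv
      (by ext; simp)

theorem fderiv_sum_apply_single {f f' : Fin N → ℝ → ℝ} {x : EuclideanSpace ℝ (Fin N)}
    (hf : ∀ i, HasDerivAt (f i) (f' i (x i)) (x i)) (j : Fin N) :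
    fderiv ℝ (fun y : EuclideanSpace ℝ (Fin N) => ∑ i, f i (y i)) x
      (EuclideanSpace.single j 1) = f' j (x j) := by
  simp [(hasFDerivAt_sum_apply hf).fderiv]

theorem hess_sum_apply {f f' : Fin N → ℝ → ℝ} {d : Fin N → ℝ} {x : EuclideanSpace ℝ (Fin N)}
    (hf : ∀ i, ∀ᶠ t in 𝓝 (x i), HasDerivAt (f i) (f' i t) t)
    (hf' : ∀ i, HasDerivAt (f' i) (d i) (x i)) :
    Hess (fun y : EuclideanSpace ℝ (Fin N) => ∑ i, f i (y i)) x = Matrix.diagonal d := by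
  have hnear : ∀ᶠ y in 𝓝 x, ∀ i, HasDerivAt (f i) (f' i (y i)) (y i) :=
    eventually_all.2 fun i =>
      (EuclideanSpace.proj (𝕜 := ℝ) i).continuous.continuousAt.eventually (hf i)
  ext i j
  have hgrad : (fun y => fderiv ℝ (fun y : EuclideanSpace ℝ (Fin N) => ∑ i, f i (y i)) y
      (EuclideanSpace.single i 1)) =ᶠ[𝓝 x] fun y => f' i (y i) :=
    hnear.mono fun y hy => fderiv_sum_apply_single hy i
  have hd : HasFDerivAt (fun y : EuclideanSpace ℝ (Fin N) => f' i (y i))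
      (d i • EuclideanSpace.proj (𝕜 := ℝ) i) x :=
    (hf' i).comp_hasFDerivAt x (EuclideanSpace.proj (𝕜 := ℝ) i).hasFDerivAt
  simp [Hess, hgrad.fderiv_eq, hd.fderiv, Matrix.diagonal_apply]

end Hessian

section Graph

variable {X : Type*} [TopologicalSpace X]

theorem isClosed_graphOn_of_tendsto_atTop {f : X → ℝ} {s : Set X} (hf : ContinuousOn f s)
    (hbdry : ∀ x ∈ closure s \ s, Tendsto f (𝓝[s] x) atTop) :
    IsClosed {p : X × ℝ | p.1 ∈ s ∧ p.2 = f p.1} := by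
  set G := {p : X × ℝ | p.1 ∈ s ∧ p.2 = f p.1}
  refine isClosed_iff_clusterPt.2 fun p hp => ?_
  have : (𝓝 p ⊓ 𝓟 G).NeBot := hp
  have hfst : Tendsto Prod.fst (𝓝 p ⊓ 𝓟 G) (𝓝[s] p.1) :=
    tendsto_inf.2 ⟨(continuous_fst.tendsto p).mono_left inf_le_left,
      tendsto_principal.2 (mem_inf_of_right fun q hq => hq.1)⟩
  have hsnd : Tendsto (f ∘ Prod.fst) (𝓝 p ⊓ 𝓟 G) (𝓝 p.2) :=
    ((continuous_snd.tendsto p).mono_left inf_le_left).congr'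
      (mem_inf_of_right fun q hq => hq.2)
  by_cases hp₁ : p.1 ∈ s
  · exact ⟨hp₁, tendsto_nhds_unique hsnd ((hf _ hp₁).tendsto.comp hfst)⟩
  · have hcl : p.1 ∈ closure s := mem_closure_iff_nhdsWithin_neBot.2 hfst.neBot
    exact absurd hsnd (not_tendsto_nhds_of_tendsto_atTop ((hbdry _ ⟨hcl, hp₁⟩).comp hfst) _)

theorem not_eqOn_of_tendsto_atTop {f g : X → ℝ} {s : Set X} {x : X} (hx : x ∈ closure s)
    (hf : Tendsto f (𝓝[s] x) atTop) (hg : ContinuousAt g x) : ¬ Set.EqOn f g s := fun h => by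
  have := mem_closure_iff_nhdsWithin_neBot.1 hx
  exact not_tendsto_atTop_of_tendsto_nhds (hg.tendsto.mono_left nhdsWithin_le_nhds)
    (hf.congr' (eventuallyEq_nhdsWithin_of_eqOn h))

end Graph

section HessSumSqAdd

variable {n : ℕ}

theorem hess_sum_sq_add_last {C₁ : ℝ} {g g' : ℝ → ℝ} {g'' : ℝ}
    {x : EuclideanSpace ℝ (Fin (n + 1))}
    (hg : ∀ᶠ t in 𝓝 (x (Fin.last n)), HasDerivAt g (g' t) t)
    (hg' : HasDerivAt g' g'' (x (Fin.last n))) :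
    Hess (fun y : EuclideanSpace ℝ (Fin (n + 1)) =>
        C₁ * ∑ i : Fin n, y i.castSucc ^ 2 + g (y (Fin.last n))) x =
      Matrix.diagonal (Fin.lastCases g'' fun _ => 2 * C₁) := by
  have hsum : (fun y : EuclideanSpace ℝ (Fin (n + 1)) =>
      C₁ * ∑ i : Fin n, y i.castSucc ^ 2 + g (y (Fin.last n))) =
      fun y => ∑ i, (Fin.lastCases g fun _ s => C₁ * s ^ 2 : Fin (n + 1) → ℝ → ℝ) i (y i) := by
    ext y
    simp [Fin.sum_univ_castSucc, Finset.mul_sum]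
  rw [hsum]
  refine hess_sum_apply (f' := Fin.lastCases g' fun _ s => C₁ * (2 * s)) (fun i => ?_) fun i => ?_
  · induction i using Fin.lastCases with
    | last => simpa using hg
    | cast i => exact .of_forall fun t => by simpa using (hasDerivAt_pow 2 t).const_mul C₁
  · induction i using Fin.lastCases with
    | last => simpa using hg'
    | cast i => simpa [mul_comm] using ((hasDerivAt_id _).const_mul 2).const_mul C₁

theorem det_diagonal_lastCases (a b : ℝ) :
    (Matrix.diagonal (Fin.lastCases a fun _ => b : Fin (n + 1) → ℝ)).det = b ^ n * a := by
  simp [Matrix.det_diagonal, Fin.prod_univ_castSucc]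

end HessSumSqAdd

section SqAddRpow

variable {n : ℕ} {α C₁ C₂ C₃ C₄ : ℝ} {x : EuclideanSpace ℝ (Fin (n + 1))}

noncomputable def sqAddRpow (n : ℕ) (α C₁ C₂ C₃ C₄ : ℝ) (x : EuclideanSpace ℝ (Fin (n + 1))) :
    ℝ :=
  C₁ * (∑ i : Fin n, (x i.castSucc) ^ 2) + C₂ * (x (Fin.last n)) ^ α + C₃ * x (Fin.last n) + C₄

theorem hess_sqAddRpow (hx : x (Fin.last n) ≠ 0) :
    Hess (sqAddRpow n α C₁ C₂ C₃ C₄) x =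
      Matrix.diagonal (Fin.lastCases (C₂ * (α * (α - 1)) * x (Fin.last n) ^ (α - 2))
        fun _ => 2 * C₁) := by
  have hsplit : sqAddRpow n α C₁ C₂ C₃ C₄ = fun y => C₁ * ∑ i : Fin n, y i.castSucc ^ 2 +
      (fun t => C₂ * t ^ α + C₃ * t + C₄) (y (Fin.last n)) := by
    ext y
    simp only [sqAddRpow]
    ring
  rw [hsplit]
  refine hess_sum_sq_add_last (g := fun t => C₂ * t ^ α + C₃ * t + C₄)
    (g' := fun t => C₂ * (α * t ^ (α - 1)) + C₃)
    ((eventually_ne_nhds hx).mono fun t ht => ?_) ?_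
  · simpa using (((hasDerivAt_rpow_const (Or.inl ht)).const_mul C₂).add
      ((hasDerivAt_id t).const_mul C₃)).add_const C₄
  · refine ((((hasDerivAt_rpow_const (p := α - 1) (Or.inl hx)).const_mul α).const_mul
      C₂).add_const C₃).congr_deriv ?_
    rw [show α - 1 - 1 = α - 2 by ring]
    ring

theorem continuousAt_sqAddRpow (hx : x (Fin.last n) ≠ 0) :
    ContinuousAt (sqAddRpow n α C₁ C₂ C₃ C₄) x := by
  unfold sqAddRpow
  fun_prop (disch := exact Or.inl hx)

theorem tendsto_sqAddRpow_atTop (hα : α < 0) (hC₂ : 0 < C₂) (hx : x (Fin.last n) = 0) :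
    Tendsto (sqAddRpow n α C₁ C₂ C₃ C₄) (𝓝[{y | 0 < y (Fin.last n)}] x) atTop := by
  have hlast : Tendsto (fun y : EuclideanSpace ℝ (Fin (n + 1)) => y (Fin.last n))
      (𝓝[{y | 0 < y (Fin.last n)}] x) (𝓝[>] 0) :=
    tendsto_nhdsWithin_iff.2
      ⟨hx ▸ (EuclideanSpace.proj (𝕜 := ℝ) _).continuous.continuousWithinAt,
        eventually_nhdsWithin_of_forall fun _ hy => hy⟩
  have hrest : Continuous fun y : EuclideanSpace ℝ (Fin (n + 1)) =>
      C₁ * ∑ i : Fin n, y i.castSucc ^ 2 + C₃ * y (Fin.last n) + C₄ := by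
    fun_prop
  refine ((hrest.tendsto x).mono_left nhdsWithin_le_nhds |>.add_atTop
    (((tendsto_rpow_neg_nhdsGT_zero hα).const_mul_atTop hC₂).comp hlast)).congr fun y => ?_
  simp only [sqAddRpow, Function.comp_apply]
  ring

theorem rpow_neg_det_hess_sqAddRpow {θ : ℝ} (hθ : θ ≠ 0) (hC₁ : 0 ≤ C₁)
    (hC₂ : 0 ≤ C₂ * ((2 - 1 / θ) * (2 - 1 / θ - 1))) (hx : 0 < x (Fin.last n)) :
    (Hess (sqAddRpow n (2 - 1 / θ) C₁ C₂ C₃ C₄) x).det ^ (-θ) =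
      ((2 * C₁) ^ n * (C₂ * ((2 - 1 / θ) * (2 - 1 / θ - 1)))) ^ (-θ) * x (Fin.last n) := by
  rw [hess_sqAddRpow hx.ne', det_diagonal_lastCases, ← mul_assoc,
    mul_rpow (by positivity) (rpow_nonneg hx.le _), ← rpow_mul hx.le,
    show (2 - 1 / θ - 2) * -θ = 1 by field_simp; ring, rpow_one]

theorem hess_rpow_neg_det_hess_sqAddRpow {θ : ℝ} (hθ : θ ≠ 0) (hC₁ : 0 ≤ C₁)
    (hC₂ : 0 ≤ C₂ * ((2 - 1 / θ) * (2 - 1 / θ - 1))) (hx : 0 < x (Fin.last n)) :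
    Hess (fun z => (Hess (sqAddRpow n (2 - 1 / θ) C₁ C₂ C₃ C₄) z).det ^ (-θ)) x = 0 := by
  set K := ((2 * C₁) ^ n * (C₂ * ((2 - 1 / θ) * (2 - 1 / θ - 1)))) ^ (-θ)
  rw [hess_congr (g := K • EuclideanSpace.proj (𝕜 := ℝ) (Fin.last n)), hess_continuousLinearMap]
  filter_upwards [(EuclideanSpace.proj (𝕜 := ℝ) (Fin.last n)).continuous.continuousAt.eventually
    (lt_mem_nhds hx)] with z hz
  exact (rpow_neg_det_hess_sqAddRpow hθ hC₁ hC₂ hz).trans (by simp [K])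

end SqAddRpow

section UpperHalfSpace

variable {n : ℕ}

theorem last_eq_zero_of_mem_closure_diff {x : EuclideanSpace ℝ (Fin (n + 1))}
    (hx : x ∈ closure {y | 0 < y (Fin.last n)} \ {y | 0 < y (Fin.last n)}) :
    x (Fin.last n) = 0 :=
  le_antisymm (not_lt.1 hx.2) (closure_lt_subset_le continuous_const
    (EuclideanSpace.proj (𝕜 := ℝ) (Fin.last n)).continuous hx.1)

theorem zero_mem_closure_upperHalfSpace :
    (0 : EuclideanSpace ℝ (Fin (n + 1))) ∈ closure {y | 0 < y (Fin.last n)} := by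
  have hcont : Continuous fun t : ℝ =>
      t • EuclideanSpace.single (Fin.last n) (1 : ℝ) := by fun_prop
  refine mem_closure_of_tendsto ((hcont.tendsto' 0 0 (by simp)).mono_left
    (nhdsWithin_le_nhds (s := Set.Ioi 0))) (eventually_nhdsWithin_of_forall fun t ht => ?_)
  simpa using ht

end UpperHalfSpace

theorem stmt13_general (n : ℕ) (θ : ℝ) (hθ : θ ∈ Set.Ioo (0:ℝ) (1/2))
    (C₁ C₂ C₃ C₄ : ℝ) (hC₁ : 0 < C₁) (hC₂ : 0 < C₂)
    (u : EuclideanSpace ℝ (Fin (n + 1)) → ℝ)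
    (hu : ∀ x, u x = C₁ * (∑ i : Fin n, (x i.castSucc) ^ 2)
        + C₂ * (x (Fin.last n)) ^ (2 - 1/θ) + C₃ * x (Fin.last n) + C₄)
    (D : Set (EuclideanSpace ℝ (Fin (n + 1))))
    (hD : D = {x | 0 < x (Fin.last n)}) :
    (∀ x ∈ D, (Hess u x).PosDef) ∧
    (∀ x ∈ D, ∑ i, ∑ j,
        (Hess u x)⁻¹ i j * Hess (fun z => ((Hess u z).det) ^ (-θ)) x i j = 0) ∧
    IsComplete {p : EuclideanSpace ℝ (Fin (n + 1)) × ℝ | p.1 ∈ D ∧ p.2 = u p.1} ∧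
    ¬ ∃ (A : Matrix (Fin (n + 1)) (Fin (n + 1)) ℝ) (b : Fin (n + 1) → ℝ) (c : ℝ),
        ∀ x ∈ D, u x = (∑ i, ∑ j, A i j * x i * x j) + (∑ i, b i * x i) + c := by
  obtain rfl : u = sqAddRpow n (2 - 1 / θ) C₁ C₂ C₃ C₄ := funext hu
  subst hD
  have hα : 2 - 1 / θ < 0 := by
    rw [sub_neg, lt_div_iff₀ hθ.1]
    linarith [hθ.2]
  have hc : 0 < C₂ * ((2 - 1 / θ) * (2 - 1 / θ - 1)) :=
    mul_pos hC₂ (mul_pos_of_neg_of_neg hα (by linarith))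
  have hbdry : ∀ x ∈ closure {y | 0 < y (Fin.last n)} \ {y | 0 < y (Fin.last n)},
      Tendsto (sqAddRpow n (2 - 1 / θ) C₁ C₂ C₃ C₄) (𝓝[{y | 0 < y (Fin.last n)}] x) atTop :=
    fun x hx => tendsto_sqAddRpow_atTop hα hC₂ (last_eq_zero_of_mem_closure_diff hx)
  refine ⟨fun x hx => ?_, fun x hx => ?_, ?_, ?_⟩
  · rw [hess_sqAddRpow (ne_of_gt hx), Matrix.posDef_diagonal_iff]
    intro i
    induction i using Fin.lastCases with
    | last => simpa using mul_pos hc (rpow_pos_of_pos hx _)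
    | cast i => simpa using hC₁
  · rw [hess_rpow_neg_det_hess_sqAddRpow hθ.1.ne' hC₁.le hc.le hx]
    simp
  · exact (isClosed_graphOn_of_tendsto_atTop
      (fun x hx => (continuousAt_sqAddRpow (ne_of_gt hx)).continuousWithinAt) hbdry).isComplete
  · rintro ⟨A, b, c, h⟩
    exact not_eqOn_of_tendsto_atTop zero_mem_closure_upperHalfSpace
      (hbdry 0 ⟨zero_mem_closure_upperHalfSpace, by simp⟩) (by fun_prop) h

/-- Euclidean complete non-quadratic affine maximal type hypersurfaces for θ ∈ (0,1/2). -/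
theorem stmt13 (n : ℕ) (hn : 1 ≤ n) (θ : ℝ) (hθ : θ ∈ Set.Ioo (0:ℝ) (1/2))
    (C₁ C₂ C₃ C₄ : ℝ) (hC₁ : 0 < C₁) (hC₂ : 0 < C₂) (hC₃ : 0 ≤ C₃) (hC₄ : 0 ≤ C₄)
    (u : EuclideanSpace ℝ (Fin (n + 1)) → ℝ)
    (hu : ∀ x, u x = C₁ * (∑ i : Fin n, (x i.castSucc) ^ 2)
        + C₂ * (x (Fin.last n)) ^ (2 - 1/θ) + C₃ * x (Fin.last n) + C₄)
    (D : Set (EuclideanSpace ℝ (Fin (n + 1))))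
    (hD : D = {x | 0 < x (Fin.last n)}) :
    (∀ x ∈ D, (Hess u x).PosDef) ∧
    (∀ x ∈ D, ∑ i, ∑ j,
        (Hess u x)⁻¹ i j * Hess (fun z => ((Hess u z).det) ^ (-θ)) x i j = 0) ∧
    IsComplete {p : EuclideanSpace ℝ (Fin (n + 1)) × ℝ | p.1 ∈ D ∧ p.2 = u p.1} ∧
    ¬ ∃ (A : Matrix (Fin (n + 1)) (Fin (n + 1)) ℝ) (b : Fin (n + 1) → ℝ) (c : ℝ),
        ∀ x ∈ D, u x = (∑ i, ∑ j, A i j * x i * x j) + (∑ i, b i * x i) + c :=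
  stmt13_general n θ hθ C₁ C₂ C₃ C₄ hC₁ hC₂ u hu D hD
end

section
/- For N = n+1 ≥ 2 and θ = (N-1)/N, the function u(y,t) = e^{|y|² + t} on ℝ^n × ℝ is an entire solution of the affine maximal type equation u^{ij}D_{ij}w = 0 with w = (det D²u)^{-θ}, and it is not a quadratic polynomial. -/
open MeasureTheory Metric Real

/-!
Write `q(y,t) = |y|² + t`, so `u = e^q`. By the chain rule
`D²(c e^{bq}) = c e^{bq} (b² ∇q ⊗ ∇q + b D²q)`, and `M = ∇q ⊗ ∇q + D²q` has constant determinant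
`2^n`, being `L diag(2,…,2,1) Lᵀ` with `L` unipotent. Hence `w = const · e^{-nq}` and
`u^{ij} D_{ij} w` is a multiple of `tr (M⁻¹ (n² ∇q ⊗ ∇q - n D²q))`. Since `M e_N = ∇q`, one has
`∇q · M⁻¹ ∇q = 1`, so `tr (M⁻¹ D²q) = N - 1 = n` and the trace is `n² - n·n = 0`.
Along the `t`-axis `u` is `e^t`, which is not a quadratic polynomial.
-/

open Matrix Filter Asymptotics

section RankOneAddDiagonal

variable {K ι : Type*} [Field K] [Fintype ι] [DecidableEq ι] {G d : ι → K} {ℓ : ι}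

theorem vecMulVec_add_diagonal_eq_mul_mul_transpose (hG : G ℓ = 1) (hd : d ℓ = 0) :
    vecMulVec G G + diagonal d =
      (1 + vecMulVec (G - Pi.single ℓ 1) (Pi.single ℓ 1)) * diagonal (Function.update d ℓ 1) *
        (1 + vecMulVec (G - Pi.single ℓ 1) (Pi.single ℓ 1))ᵀ := by
  ext i j
  simp only [Matrix.add_apply, vecMulVec_apply, diagonal_apply, mul_apply, transpose_apply,
    one_apply, Pi.sub_apply, Pi.single_apply, Function.update_apply, add_mul, mul_add, ite_mul,
    mul_ite, Finset.sum_add_distrib]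
  by_cases hi : i = ℓ <;> by_cases hj : j = ℓ <;> by_cases hij : i = j <;>
    simp_all [add_comm]

theorem det_vecMulVec_add_diagonal (hG : G ℓ = 1) (hd : d ℓ = 0) :
    (vecMulVec G G + diagonal d).det = ∏ i, Function.update d ℓ 1 i := by
  have hL : (1 + vecMulVec (G - Pi.single ℓ 1) (Pi.single ℓ 1)).det = 1 := by
    rw [vecMulVec_eq Unit, det_one_add_replicateCol_mul_replicateRow]
    simp [hG]
  rw [vecMulVec_add_diagonal_eq_mul_mul_transpose hG hd, det_mul, det_mul, det_transpose, hL,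
    det_diagonal, one_mul, mul_one]

theorem vecMulVec_add_diagonal_mulVec_single (hG : G ℓ = 1) (hd : d ℓ = 0) :
    (vecMulVec G G + diagonal d) *ᵥ Pi.single ℓ 1 = G := by
  ext i
  by_cases h : i = ℓ <;> simp [vecMulVec_apply, hG, hd, h]

theorem trace_inv_mul_vecMulVec_add_diagonal (hG : G ℓ = 1) (hd : d ℓ = 0)
    (hM : IsUnit (vecMulVec G G + diagonal d).det) (b : K) :
    ((vecMulVec G G + diagonal d)⁻¹ * (b ^ 2 • vecMulVec G G + b • diagonal d)).trace =
      b * (b + (Fintype.card ι - 1)) := by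
  set M := vecMulVec G G + diagonal d
  have hGG : (M⁻¹ * vecMulVec G G).trace = 1 := by
    have hInvG : M⁻¹ *ᵥ G = Pi.single ℓ 1 := by
      conv_lhs => rw [← vecMulVec_add_diagonal_mulVec_single hG hd]
      rw [mulVec_mulVec, nonsing_inv_mul _ hM, one_mulVec]
    rw [mul_vecMulVec, hInvG, trace_vecMulVec, single_one_dotProduct, hG]
  have hD : (M⁻¹ * diagonal d).trace = Fintype.card ι - 1 := by
    have hId : (M⁻¹ * M).trace = Fintype.card ι := by simp [nonsing_inv_mul _ hM]
    rw [Matrix.mul_add, trace_add, hGG] at hId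
    linear_combination hId
  rw [Matrix.mul_add, Matrix.mul_smul, Matrix.mul_smul, trace_add, trace_smul, trace_smul, hGG,
    hD, smul_eq_mul, smul_eq_mul]
  ring

end RankOneAddDiagonal

theorem Matrix.sum_sum_mul_eq_trace_mul_transpose {ι R : Type*} [Fintype ι] [CommSemiring R]
    (A B : Matrix ι ι R) : ∑ i, ∑ j, A i j * B i j = (A * Bᵀ).trace := by
  simp [trace, mul_apply]

theorem Real.exp_ne_quadratic : ¬ ∃ a b c : ℝ, ∀ t, exp t = a * t * t + b * t + c := by
  rintro ⟨a, b, c, h⟩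
  have hquad : (fun t => a * t * t + b * t + c) =o[atTop] exp := by
    have h2 := (isLittleO_pow_exp_atTop (n := 2)).const_mul_left a
    have h1 := (isLittleO_pow_exp_atTop (n := 1)).const_mul_left b
    have h0 := (isLittleO_pow_exp_atTop (n := 0)).const_mul_left c
    refine ((h2.add h1).add h0).congr_left fun t => ?_
    ring
  rw [← funext h] at hquad
  exact isLittleO_irrefl (.of_forall fun t => (exp_pos t).ne') hquad

theorem hess_comp {N : ℕ} {φ : EuclideanSpace ℝ (Fin N) → ℝ} (hφ : ContDiff ℝ 2 φ)
    {h h' h'' : ℝ → ℝ} (hh : ∀ s, HasDerivAt h (h' s) s) (hh' : ∀ s, HasDerivAt h' (h'' s) s)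
    (x : EuclideanSpace ℝ (Fin N)) (i j : Fin N) :
    Hess (fun y => h (φ y)) x i j =
      h'' (φ x) * fderiv ℝ φ x (EuclideanSpace.single i 1) *
          fderiv ℝ φ x (EuclideanSpace.single j 1) + h' (φ x) * Hess φ x i j := by
  have hdiff : Differentiable ℝ φ := hφ.differentiable (by norm_num)
  have hfirst : (fun y => fderiv ℝ (fun y => h (φ y)) y (EuclideanSpace.single i 1)) =
      fun y => h' (φ y) * fderiv ℝ φ y (EuclideanSpace.single i 1) := by
    funext y
    have hcomp : HasFDerivAt (fun y => h (φ y)) (h' (φ y) • fderiv ℝ φ y) y :=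
      (hh (φ y)).comp_hasFDerivAt y (hdiff y).hasFDerivAt
    simp [hcomp.fderiv]
  have hpartial : DifferentiableAt ℝ (fun y => fderiv ℝ φ y (EuclideanSpace.single i 1)) x :=
    ((hφ.fderiv_right (m := 1) (by norm_num)).differentiable (by norm_num) x).clm_apply
      (differentiableAt_const _)
  have houter : HasFDerivAt (fun y => h' (φ y)) (h'' (φ x) • fderiv ℝ φ x) x :=
    (hh' (φ x)).comp_hasFDerivAt x (hdiff x).hasFDerivAt
  simp only [Hess]
  rw [hfirst, (houter.fun_mul hpartial.hasFDerivAt).fderiv]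
  simp only [_root_.add_apply, _root_.smul_apply, smul_eq_mul]
  ring

theorem hasDerivAt_const_mul_exp_const_mul (c b s : ℝ) :
    HasDerivAt (fun s => c * exp (b * s)) (c * b * exp (b * s)) s := by
  refine (((hasDerivAt_id' s).const_mul b).exp.const_mul c).congr_deriv ?_
  ring

section Paraboloid

variable (n : ℕ)

def paraboloid (x : EuclideanSpace ℝ (Fin (n + 1))) : ℝ :=
  ∑ i : Fin n, x i.castSucc ^ 2 + x (Fin.last n)

def paraboloidGrad (x : EuclideanSpace ℝ (Fin (n + 1))) (i : Fin (n + 1)) : ℝ :=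
  if i = Fin.last n then 1 else 2 * x i

def paraboloidHessDiag (i : Fin (n + 1)) : ℝ :=
  if i = Fin.last n then 0 else 2

noncomputable def paraboloidMatrix (x : EuclideanSpace ℝ (Fin (n + 1))) :
    Matrix (Fin (n + 1)) (Fin (n + 1)) ℝ :=
  vecMulVec (paraboloidGrad n x) (paraboloidGrad n x) + diagonal (paraboloidHessDiag n)

theorem contDiff_paraboloid : ContDiff ℝ 2 (paraboloid n) := by
  unfold paraboloid
  fun_prop

theorem hasFDerivAt_paraboloid (x : EuclideanSpace ℝ (Fin (n + 1))) :
    HasFDerivAt (paraboloid n)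
      (∑ i : Fin n, (2 * x i.castSucc) • EuclideanSpace.proj (𝕜 := ℝ) i.castSucc +
        EuclideanSpace.proj (Fin.last n)) x := by
  refine (HasFDerivAt.fun_sum fun i _ => ?_).add (PiLp.hasFDerivAt_apply 2 x _)
  simpa using (PiLp.hasFDerivAt_apply (𝕜 := ℝ) 2 x i.castSucc).pow 2

theorem fderiv_paraboloid_single (x : EuclideanSpace ℝ (Fin (n + 1))) (j : Fin (n + 1)) :
    fderiv ℝ (paraboloid n) x (EuclideanSpace.single j 1) = paraboloidGrad n x j := by
  rw [(hasFDerivAt_paraboloid n x).fderiv]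
  induction j using Fin.lastCases <;> simp [paraboloidGrad, (Fin.castSucc_lt_last _).ne]

theorem hess_paraboloid (x : EuclideanSpace ℝ (Fin (n + 1))) :
    Hess (paraboloid n) x = diagonal (paraboloidHessDiag n) := by
  ext i j
  have hpartial : (fun y => fderiv ℝ (paraboloid n) y (EuclideanSpace.single i 1)) =
      fun y => paraboloidGrad n y i := funext fun y => fderiv_paraboloid_single n y i
  simp only [Hess, hpartial, paraboloidGrad, paraboloidHessDiag, diagonal_apply]
  by_cases hi : i = Fin.last n
  · simp [hi]
  · have h2 : HasFDerivAt (fun y : EuclideanSpace ℝ (Fin (n + 1)) => 2 * y i)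
        ((2 : ℝ) • EuclideanSpace.proj (𝕜 := ℝ) i) x :=
      (PiLp.hasFDerivAt_apply 2 x i).const_mul (2 : ℝ)
    simp [hi, h2.fderiv, PiLp.single_apply]

theorem hess_const_mul_exp_paraboloid (c b : ℝ) (x : EuclideanSpace ℝ (Fin (n + 1))) :
    Hess (fun z => c * exp (b * paraboloid n z)) x =
      (c * exp (b * paraboloid n x)) •
        (b ^ 2 • vecMulVec (paraboloidGrad n x) (paraboloidGrad n x) +
          b • diagonal (paraboloidHessDiag n)) := by
  ext i j
  rw [hess_comp (contDiff_paraboloid n) (hasDerivAt_const_mul_exp_const_mul c b)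
    (hasDerivAt_const_mul_exp_const_mul (c * b) b), fderiv_paraboloid_single,
    fderiv_paraboloid_single, hess_paraboloid]
  simp only [Matrix.smul_apply, Matrix.add_apply, vecMulVec_apply, smul_eq_mul]
  ring

theorem hess_exp_paraboloid (x : EuclideanSpace ℝ (Fin (n + 1))) :
    Hess (fun z => exp (paraboloid n z)) x = exp (paraboloid n x) • paraboloidMatrix n x := by
  simpa [paraboloidMatrix] using hess_const_mul_exp_paraboloid n 1 1 x

theorem det_paraboloidMatrix (x : EuclideanSpace ℝ (Fin (n + 1))) :
    (paraboloidMatrix n x).det = 2 ^ n := by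
  rw [paraboloidMatrix, det_vecMulVec_add_diagonal (ℓ := Fin.last n) (by simp [paraboloidGrad])
    (by simp [paraboloidHessDiag]), Fin.prod_univ_castSucc]
  simp [paraboloidHessDiag, (Fin.castSucc_lt_last _).ne]

theorem trace_inv_hess_exp_paraboloid_mul_hess (c : ℝ) (x : EuclideanSpace ℝ (Fin (n + 1))) :
    ((Hess (fun z => exp (paraboloid n z)) x)⁻¹ *
      Hess (fun z => c * exp (-n * paraboloid n z)) x).trace = 0 := by
  have hdet : IsUnit (paraboloidMatrix n x).det := by simp [det_paraboloidMatrix]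
  have hinv : (exp (paraboloid n x) • paraboloidMatrix n x)⁻¹ =
      (exp (paraboloid n x))⁻¹ • (paraboloidMatrix n x)⁻¹ :=
    inv_smul' _ (Units.mk0 _ (exp_pos _).ne') hdet
  rw [hess_exp_paraboloid, hinv, hess_const_mul_exp_paraboloid, Matrix.smul_mul,
    Matrix.mul_smul, trace_smul, trace_smul, paraboloidMatrix,
    trace_inv_mul_vecMulVec_add_diagonal (ℓ := Fin.last n) (by simp [paraboloidGrad])
      (by simp [paraboloidHessDiag]) (by rwa [paraboloidMatrix] at hdet)]
  simp

end Paraboloid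

theorem stmt18_general (n : ℕ) (θ : ℝ)
    (hθ : θ = ((n : ℝ) + 1 - 1) / ((n : ℝ) + 1))
    (u : EuclideanSpace ℝ (Fin (n + 1)) → ℝ)
    (hu : ∀ x, u x = Real.exp ((∑ i : Fin n, (x i.castSucc) ^ 2) + x (Fin.last n))) :
    (∀ x : EuclideanSpace ℝ (Fin (n + 1)), ∑ i, ∑ j,
        (Hess u x)⁻¹ i j * Hess (fun z => ((Hess u z).det) ^ (-θ)) x i j = 0) ∧
    ¬ ∃ (A : Matrix (Fin (n + 1)) (Fin (n + 1)) ℝ) (b : Fin (n + 1) → ℝ) (c : ℝ),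
        ∀ x : EuclideanSpace ℝ (Fin (n + 1)),
          u x = (∑ i, ∑ j, A i j * x i * x j) + (∑ i, b i * x i) + c := by
  have hu' : u = fun z => exp (paraboloid n z) := funext hu
  have hw : (fun z => (Hess u z).det ^ (-θ)) =
      fun z => ((2 : ℝ) ^ n) ^ (-θ) * exp (-n * paraboloid n z) := by
    funext z
    rw [hu', hess_exp_paraboloid, det_smul, det_paraboloidMatrix, Fintype.card_fin,
      ← exp_nat_mul, mul_rpow (by positivity) (by positivity), ← exp_mul, mul_comm]
    congr 2
    rw [hθ]
    push_cast
    field_simp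
    ring
  refine ⟨fun x => ?_, ?_⟩
  · have hsymm : (Hess (fun z => (Hess u z).det ^ (-θ)) x)ᵀ =
        Hess (fun z => (Hess u z).det ^ (-θ)) x := by
      rw [hw, hess_const_mul_exp_paraboloid]
      simp only [transpose_smul, transpose_add, transpose_vecMulVec, diagonal_transpose]
    rw [sum_sum_mul_eq_trace_mul_transpose, hsymm, hw, hu']
    exact trace_inv_hess_exp_paraboloid_mul_hess n _ x
  · rintro ⟨A, b, c, hquad⟩
    refine Real.exp_ne_quadratic ⟨A (Fin.last n) (Fin.last n), b (Fin.last n), c, fun t => ?_⟩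
    simpa [hu, (Fin.castSucc_lt_last _).ne, Pi.single_apply] using
      hquad (EuclideanSpace.single (Fin.last n) t)

/-- A non-quadratic entire affine maximal type hypersurface for θ = (N-1)/N. -/
theorem stmt18 (n : ℕ) (hn : 1 ≤ n) (θ : ℝ)
    (hθ : θ = ((n : ℝ) + 1 - 1) / ((n : ℝ) + 1))
    (u : EuclideanSpace ℝ (Fin (n + 1)) → ℝ)
    (hu : ∀ x, u x = Real.exp ((∑ i : Fin n, (x i.castSucc) ^ 2) + x (Fin.last n))) :
    (∀ x : EuclideanSpace ℝ (Fin (n + 1)), ∑ i, ∑ j,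
        (Hess u x)⁻¹ i j * Hess (fun z => ((Hess u z).det) ^ (-θ)) x i j = 0) ∧
    ¬ ∃ (A : Matrix (Fin (n + 1)) (Fin (n + 1)) ℝ) (b : Fin (n + 1) → ℝ) (c : ℝ),
        ∀ x : EuclideanSpace ℝ (Fin (n + 1)),
          u x = (∑ i, ∑ j, A i j * x i * x j) + (∑ i, b i * x i) + c :=
  stmt18_general n θ hθ u hu
end
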